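/- Suppose H_0 is symmetric with H_0 ⪯ M^{-1} (M symmetric positive definite), and the sequence (H_k) is generated by the BFGS inverse update: H_{k+1} = (I − s_k l_k^T/(s_k^T l_k)) H_k (I − l_k s_k^T/(s_k^T l_k)) + s_k s_k^T/(s_k^T l_k) with s_k ≠ 0 and l_k = M s_k for each k. Then H_k ⪯ M^{-1} for all k. -/

import Mathlib

open Matrix

noncomputable def bfgsUpdate {n : ℕ} (H : Matrix (Fin n) (Fin n) ℝ)
    (s l : Fin n → ℝ) : Matrix (Fin n) (Fin n) ℝ :=
  (1 - (s ⬝ᵥ l)⁻¹ • Matrix.vecMulVec s l) * H * (1 - (s ⬝ᵥ l)⁻¹ • Matrix.vecMulVec l s)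
    + (s ⬝ᵥ l)⁻¹ • Matrix.vecMulVec s s

/-!
Write `E = I - s lᵀ / (sᵀ l)`, so that the BFGS update reads `H⁺ = E H Eᵀ + s sᵀ / (sᵀ l)`.
When `l = M s`, the matrix `M⁻¹` is reproduced by the update: `E M⁻¹ Eᵀ = M⁻¹ - s sᵀ / (sᵀ l)`.
Subtracting, `M⁻¹ - H⁺ = E (M⁻¹ - H) Eᵀ` is a congruence of `M⁻¹ - H`, hence positive
semidefinite whenever `M⁻¹ - H` is, and the claim follows by induction on `k`.
-/

section BFGSFactor

variable {m α : Type*} [Fintype m] [DecidableEq m] [Field α]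

noncomputable def bfgsFactor (s l : m → α) : Matrix m m α :=
  1 - (s ⬝ᵥ l)⁻¹ • vecMulVec s l

theorem transpose_bfgsFactor (s l : m → α) :
    (bfgsFactor s l)ᵀ = 1 - (s ⬝ᵥ l)⁻¹ • vecMulVec l s := by
  rw [bfgsFactor, transpose_sub, transpose_one, transpose_smul, transpose_vecMulVec]

theorem bfgsFactor_mul_inv_mul_transpose {M : Matrix m m α} (hM : M.IsSymm)
    (hdet : IsUnit M.det) {s : m → α} (hs : s ⬝ᵥ M *ᵥ s ≠ 0) :
    bfgsFactor s (M *ᵥ s) * M⁻¹ * (bfgsFactor s (M *ᵥ s))ᵀ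
      = M⁻¹ - (s ⬝ᵥ M *ᵥ s)⁻¹ • vecMulVec s s := by
  set l := M *ᵥ s
  have hsl : vecMulVec s l * M⁻¹ = vecMulVec s s := by
    rw [vecMulVec_mul, show l = s ᵥ* M by rw [← hM.eq, vecMul_transpose], vecMul_vecMul,
      mul_nonsing_inv _ hdet, vecMul_one]
  have hls : M⁻¹ * vecMulVec l s = vecMulVec s s := by
    rw [mul_vecMulVec, mulVec_mulVec, nonsing_inv_mul _ hdet, one_mulVec]
  have hss : vecMulVec s s * vecMulVec l s = (s ⬝ᵥ l) • vecMulVec s s := by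
    rw [vecMulVec_mul_vecMulVec, vecMulVec_smul]
  rw [transpose_bfgsFactor, bfgsFactor]
  simp only [sub_mul, mul_sub, one_mul, mul_one, Matrix.smul_mul, Matrix.mul_smul, hsl, hls,
    hss, smul_smul, inv_mul_cancel₀ hs]
  module

end BFGSFactor

theorem bfgsUpdate_eq {n : ℕ} (H : Matrix (Fin n) (Fin n) ℝ) (s l : Fin n → ℝ) :
    bfgsUpdate H s l
      = bfgsFactor s l * H * (bfgsFactor s l)ᵀ + (s ⬝ᵥ l)⁻¹ • vecMulVec s s := by
  rw [transpose_bfgsFactor, bfgsUpdate, bfgsFactor]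

theorem inv_sub_bfgsUpdate_eq {n : ℕ} {M : Matrix (Fin n) (Fin n) ℝ} (hM : M.IsSymm)
    (hdet : IsUnit M.det) (H : Matrix (Fin n) (Fin n) ℝ) {s : Fin n → ℝ}
    (hs : s ⬝ᵥ M *ᵥ s ≠ 0) :
    M⁻¹ - bfgsUpdate H s (M *ᵥ s)
      = bfgsFactor s (M *ᵥ s) * (M⁻¹ - H) * (bfgsFactor s (M *ᵥ s))ᵀ := by
  rw [mul_sub, sub_mul, bfgsFactor_mul_inv_mul_transpose hM hdet hs, bfgsUpdate_eq]
  abel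

theorem posSemidef_inv_sub_bfgsUpdate {n : ℕ} {M H : Matrix (Fin n) (Fin n) ℝ}
    (hM : M.PosDef) (hH : (M⁻¹ - H).PosSemidef) {s : Fin n → ℝ} (hs : s ≠ 0) :
    (M⁻¹ - bfgsUpdate H s (M *ᵥ s)).PosSemidef := by
  have hsym : M.IsSymm := by simpa using hM.isHermitian
  have hsMs : s ⬝ᵥ M *ᵥ s ≠ 0 := by simpa using (hM.dotProduct_mulVec_pos hs).ne'
  have hdet : IsUnit M.det := (isUnit_iff_isUnit_det M).mp hM.isUnit
  rw [inv_sub_bfgsUpdate_eq hsym hdet H hsMs, ← conjTranspose_eq_transpose_of_trivial]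
  exact hH.mul_mul_conjTranspose_same _

theorem stmt_18_general {n : ℕ} (M : Matrix (Fin n) (Fin n) ℝ) (hM : M.PosDef)
    (s : ℕ → Fin n → ℝ) (hs : ∀ k, s k ≠ 0)
    (H : ℕ → Matrix (Fin n) (Fin n) ℝ)
    (hinit : (M⁻¹ - H 0).PosSemidef)
    (hupd : ∀ k, H (k + 1) = bfgsUpdate (H k) (s k) (M.mulVec (s k))) :
    ∀ k, (M⁻¹ - H k).PosSemidef := by
  intro k
  induction k with
  | zero => exact hinit
  | succ k ih => exact hupd k ▸ posSemidef_inv_sub_bfgsUpdate hM ih (hs k)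

theorem stmt_18 {n : ℕ} (M : Matrix (Fin n) (Fin n) ℝ) (hM : M.PosDef)
    (s : ℕ → Fin n → ℝ) (hs : ∀ k, s k ≠ 0)
    (H : ℕ → Matrix (Fin n) (Fin n) ℝ) (hH0 : (H 0).IsSymm)
    (hinit : (M⁻¹ - H 0).PosSemidef)
    (hupd : ∀ k, H (k + 1) = bfgsUpdate (H k) (s k) (M.mulVec (s k))) :
    ∀ k, (M⁻¹ - H k).PosSemidef :=
  stmt_18_general M hM s hs H hinit hupd
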